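/- arXiv:2105.06332 — 5 statements merged into one kernel-verified Lean document; each statement's English description precedes it below -/
import Mathlib

section
/- The assignment R sending a differentiable function f : ℝⁿ → ℝᵐ to the lens (f, (x, v) ↦ (Df_x)ᵀ v) : (ℝⁿ, ℝⁿ) → (ℝᵐ, ℝᵐ), whose backward map applies the transpose of the derivative of f at the forward input, is functorial: R(id) = id and R(f ≫ g) = R(f) ≫ R(g), where lens composition is (g∘f, (x, w) ↦ put_f(x, put_g(f x, w))). -/
/-- A lens `(X, X') → (Y, Y')` over `Set`: a forward map `get : X → Y` and a
backward map `put : X × Y' → X'`. -/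
structure Lens (X X' Y Y' : Type) where
  get : X → Y
  put : X × Y' → X'

/-- The identity lens on `(X, X')`. -/
def Lens.id (X X' : Type) : Lens X X' X X' :=
  ⟨fun x => x, fun p => p.2⟩

/-- Composition of lenses. -/
def Lens.comp {X X' Y Y' Z Z' : Type}
    (f : Lens X X' Y Y') (g : Lens Y Y' Z Z') : Lens X X' Z Z' :=
  ⟨fun x => g.get (f.get x), fun p => f.put (p.1, g.put (f.get p.1, p.2))⟩

noncomputable section

abbrev E (n : ℕ) : Type := EuclideanSpace ℝ (Fin n)

/-- `R` sends a differentiable function `f : ℝⁿ → ℝᵐ` to the lens whose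
forward map is `f` and whose backward map applies the transpose (adjoint) of
the derivative of `f` at the forward input. -/
def R {n m : ℕ} (f : E n → E m) : Lens (E n) (E n) (E m) (E m) :=
  ⟨f, fun p => ContinuousLinearMap.adjoint (fderiv ℝ f p.1) p.2⟩

/-- `R` is functorial: `R(id) = id` and `R(f ≫ g) = R(f) ≫ R(g)` for
differentiable `f`, `g`. -/
theorem R_functorial {n m k : ℕ} (f : E n → E m) (g : E m → E k)
    (hf : Differentiable ℝ f) (hg : Differentiable ℝ g) :
    R (fun x : E n => x) = Lens.id (E n) (E n) ∧
    R (g ∘ f) = (R f).comp (R g) := by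
  constructor
  · simp [R, Lens.id, fderiv_id', ContinuousLinearMap.adjoint_id]
  · simp only [R, Lens.comp]
    congr 1
    funext p
    rw [fderiv_comp p.1 (hg (f p.1)) (hf p.1), ContinuousLinearMap.adjoint_comp]
    rfl

end
end

section
/- The Nash product is natural: for morphisms f : X → Y and f' : X' → Y' in a symmetric monoidal category M and selection relations ε ∈ Sel(X), δ ∈ Sel(X'), one has Sel(f)(ε) ⊠ Sel(f')(δ) = Sel(f ⊗ f')(ε ⊠ δ). -/
open CategoryTheory MonoidalCategory

variable {M : Type*} [Category M] [MonoidalCategory M]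

/-- A selection relation on `X`: a subset of pairs of a state `I ⟶ X` and a
costate `X ⟶ I`. -/
abbrev Sel (X : M) : Type _ := Set ((𝟙_ M ⟶ X) × (X ⟶ 𝟙_ M))

/-- Pushforward of selection relations:
`Sel(f)(ε) = {(x ≫ f, k) | (x, f ≫ k) ∈ ε}`. -/
def SelMap {X Y : M} (f : X ⟶ Y) (ε : Sel X) : Sel Y :=
  {p | ∃ x : 𝟙_ M ⟶ X, p.1 = x ≫ f ∧ (x, f ≫ p.2) ∈ ε}

variable [SymmetricCategory M]

/-- The context for the second player obtained by plugging the first player's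
state `x` into `k : X ⊗ Y ⟶ I`. -/
def ctxSnd {X Y : M} (x : 𝟙_ M ⟶ X) (k : X ⊗ Y ⟶ 𝟙_ M) : Y ⟶ 𝟙_ M :=
  (λ_ Y).inv ≫ (x ⊗ₘ 𝟙 Y) ≫ k

/-- The context for the first player obtained by plugging the second player's
state `y` into `k : X ⊗ Y ⟶ I`. -/
def ctxFst {X Y : M} (y : 𝟙_ M ⟶ Y) (k : X ⊗ Y ⟶ 𝟙_ M) : X ⟶ 𝟙_ M :=
  (ρ_ X).inv ≫ (𝟙 X ⊗ₘ y) ≫ k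

/-- The independent state `x ⊗ y : I ⟶ X ⊗ Y`. -/
def pairState {X Y : M} (x : 𝟙_ M ⟶ X) (y : 𝟙_ M ⟶ Y) : 𝟙_ M ⟶ X ⊗ Y :=
  (λ_ (𝟙_ M)).inv ≫ (x ⊗ₘ y)

/-- The Nash product of selection relations:
`ε ⊠ δ = {(x ⊗ y, k) | ε(x, k_y) and δ(y, k_x)}`. -/
def nashProd {X Y : M} (ε : Sel X) (δ : Sel Y) : Sel (X ⊗ Y) :=
  {p | ∃ (x : 𝟙_ M ⟶ X) (y : 𝟙_ M ⟶ Y),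
    p.1 = pairState x y ∧ (x, ctxFst y p.2) ∈ ε ∧ (y, ctxSnd x p.2) ∈ δ}

/-- Naturality of the Nash product: for `f : X ⟶ Y`, `f' : X' ⟶ Y'` and
selection relations `ε ∈ Sel(X)`, `δ ∈ Sel(X')`,
`Sel(f)(ε) ⊠ Sel(f')(δ) = Sel(f ⊗ₘ f')(ε ⊠ δ)`. -/
lemma ctxFst_comp {X Y X' Y' : M} (f : X ⟶ Y) (f' : X' ⟶ Y')
    (y : 𝟙_ M ⟶ X') (k : Y ⊗ Y' ⟶ 𝟙_ M) :
    f ≫ ctxFst (y ≫ f') k = ctxFst y ((f ⊗ₘ f') ≫ k) := by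
  simp only [ctxFst, id_tensorHom, tensorHom_def', Category.assoc,
    MonoidalCategory.id_whiskerRight, MonoidalCategory.whiskerLeft_id,
    Category.id_comp, Category.comp_id,
    ← MonoidalCategory.whiskerLeft_comp_assoc]
  rw [whisker_exchange_assoc]
  simp [← rightUnitor_inv_naturality_assoc]

lemma ctxSnd_comp {X Y X' Y' : M} (f : X ⟶ Y) (f' : X' ⟶ Y')
    (x : 𝟙_ M ⟶ X) (k : Y ⊗ Y' ⟶ 𝟙_ M) :
    f' ≫ ctxSnd (x ≫ f) k = ctxSnd x ((f ⊗ₘ f') ≫ k) := by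
  simp only [ctxSnd, tensorHom_id, MonoidalCategory.tensorHom_def, Category.assoc,
    MonoidalCategory.id_whiskerRight, MonoidalCategory.whiskerLeft_id,
    Category.id_comp, Category.comp_id,
    ← MonoidalCategory.comp_whiskerRight_assoc]
  rw [← whisker_exchange_assoc]
  simp [← leftUnitor_inv_naturality_assoc]

lemma pairState_comp {X Y X' Y' : M} (f : X ⟶ Y) (f' : X' ⟶ Y')
    (x : 𝟙_ M ⟶ X) (y : 𝟙_ M ⟶ X') :
    pairState (x ≫ f) (y ≫ f') = pairState x y ≫ (f ⊗ₘ f') := by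
  simp [pairState]

/-- Naturality of the Nash product: for `f : X ⟶ Y`, `f' : X' ⟶ Y'` and
selection relations `ε ∈ Sel(X)`, `δ ∈ Sel(X')`,
`Sel(f)(ε) ⊠ Sel(f')(δ) = Sel(f ⊗ f')(ε ⊠ δ)`. -/
theorem nashProd_natural {X Y X' Y' : M} (f : X ⟶ Y) (f' : X' ⟶ Y')
    (ε : Sel X) (δ : Sel X') :
    nashProd (SelMap f ε) (SelMap f' δ) = SelMap (f ⊗ₘ f') (nashProd ε δ) := by
  ext ⟨p, k⟩
  constructor
  · rintro ⟨x₁, y₁, hp, ⟨x, hx, hε⟩, ⟨y, hy, hδ⟩⟩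
    dsimp only at hp hx hy hε hδ
    exact ⟨pairState x y, by rw [hp, hx, hy, pairState_comp],
      x, y, rfl, by rwa [← ctxFst_comp, ← hy], by rwa [← ctxSnd_comp, ← hx]⟩
  · rintro ⟨z, hp, x, y, hz, hε, hδ⟩
    dsimp only at hp hz hε hδ
    exact ⟨x ≫ f, y ≫ f', by rw [hp, hz, pairState_comp],
      ⟨x, rfl, by rwa [ctxFst_comp]⟩, ⟨y, rfl, by rwa [ctxSnd_comp]⟩⟩
end

section
/- The Nash product of selection relations is commutative up to the symmetry: in a symmetric monoidal category, Sel(σ_{X,Y})(ε ⊠ δ) = δ ⊠ ε, where σ_{X,Y} : X ⊗ Y → Y ⊗ X is the braiding. -/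
open CategoryTheory MonoidalCategory

variable {M : Type*} [Category M] [MonoidalCategory M]

variable [SymmetricCategory M]

private lemma pairState_braiding {X Y : M} (x : 𝟙_ M ⟶ X) (y : 𝟙_ M ⟶ Y) :
    pairState x y ≫ (β_ X Y).hom = pairState y x := by
  unfold pairState
  rw [Category.assoc, BraidedCategory.braiding_naturality]
  simp
  rw [MonoidalCategory.unitors_inv_equal]
  simp

private lemma ctxSnd_braiding {X Y : M} (x : 𝟙_ M ⟶ X) (k : Y ⊗ X ⟶ 𝟙_ M) :
    ctxSnd x ((β_ X Y).hom ≫ k) = ctxFst x k := by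
  unfold ctxSnd ctxFst
  rw [← Category.assoc (x ⊗ₘ 𝟙 Y), BraidedCategory.braiding_naturality]
  simp

private lemma ctxFst_braiding {X Y : M} (y : 𝟙_ M ⟶ Y) (k : Y ⊗ X ⟶ 𝟙_ M) :
    ctxFst y ((β_ X Y).hom ≫ k) = ctxSnd y k := by
  unfold ctxSnd ctxFst
  rw [← Category.assoc (𝟙 X ⊗ₘ y), BraidedCategory.braiding_naturality]
  simp

/-- The Nash product is commutative up to the symmetry:
`Sel(σ_{X,Y})(ε ⊠ δ) = δ ⊠ ε`, where `σ` is the braiding. -/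
theorem nashProd_comm {X Y : M} (ε : Sel X) (δ : Sel Y) :
    SelMap (β_ X Y).hom (nashProd ε δ) = nashProd δ ε := by
  ext p
  constructor
  · rintro ⟨x', hx', x, y, hxy, hε, hδ⟩
    dsimp only at hxy hε hδ
    refine ⟨y, x, ?_, ?_, ?_⟩
    · rw [hx', hxy, pairState_braiding]
    · rwa [← ctxSnd_braiding]
    · rwa [← ctxFst_braiding]
  · rintro ⟨y, x, h1, hδ, hε⟩
    refine ⟨pairState x y, by rw [h1, pairState_braiding], x, y, rfl, ?_, ?_⟩
    · rwa [ctxFst_braiding]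
    · rwa [ctxSnd_braiding]
end

section
/- The Nash product of selection relations is associative: for selection relations ε, δ, ζ on objects X, Y, Z of a symmetric monoidal category, Sel(α_{X,Y,Z})((ε ⊠ δ) ⊠ ζ) = ε ⊠ (δ ⊠ ζ), where α is the associator. -/
open CategoryTheory MonoidalCategory

variable {M : Type*} [Category M] [MonoidalCategory M]

variable [SymmetricCategory M]

section Aux
set_option linter.unusedSectionVars false

private lemma pairState_assoc {X Y Z : M} (x : 𝟙_ M ⟶ X) (y : 𝟙_ M ⟶ Y) (z : 𝟙_ M ⟶ Z) :
    pairState (pairState x y) z ≫ (α_ X Y Z).hom = pairState x (pairState y z) := by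
  unfold pairState
  monoidal

private lemma ctxFst_assoc {X Y Z : M} (y : 𝟙_ M ⟶ Y) (z : 𝟙_ M ⟶ Z)
    (k : X ⊗ (Y ⊗ Z) ⟶ 𝟙_ M) :
    ctxFst y (ctxFst z ((α_ X Y Z).hom ≫ k)) = ctxFst (pairState y z) k := by
  unfold ctxFst pairState
  simp [MonoidalCategory.tensorHom_def, whisker_exchange, ← MonoidalCategory.whiskerLeft_comp_assoc]

private lemma ctxMid_assoc {X Y Z : M} (x : 𝟙_ M ⟶ X) (z : 𝟙_ M ⟶ Z)
    (k : X ⊗ (Y ⊗ Z) ⟶ 𝟙_ M) :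
    ctxSnd x (ctxFst z ((α_ X Y Z).hom ≫ k)) = ctxFst z (ctxSnd x k) := by
  unfold ctxFst ctxSnd
  have h1 : (ρ_ (X ⊗ Y)).inv ≫ (𝟙 (X ⊗ Y) ⊗ₘ z) ≫ (α_ X Y Z).hom ≫ k
      = X ◁ ((ρ_ Y).inv ≫ Y ◁ z) ≫ k := by
    have : (ρ_ (X ⊗ Y)).inv ≫ (𝟙 (X ⊗ Y) ⊗ₘ z) ≫ (α_ X Y Z).hom
        = X ◁ ((ρ_ Y).inv ≫ Y ◁ z) := by monoidal
    rw [← this]; simp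
  rw [tensorHom_id, tensorHom_id, h1, ← whisker_exchange_assoc,
    ← leftUnitor_inv_naturality_assoc]
  simp [id_tensorHom]

private lemma ctxSnd_assoc {X Y Z : M} (x : 𝟙_ M ⟶ X) (y : 𝟙_ M ⟶ Y)
    (k : X ⊗ (Y ⊗ Z) ⟶ 𝟙_ M) :
    ctxSnd (pairState x y) ((α_ X Y Z).hom ≫ k) = ctxSnd y (ctxSnd x k) := by
  unfold ctxSnd pairState
  have h1 : ((x ⊗ₘ y) ⊗ₘ 𝟙 Z) ≫ (α_ X Y Z).hom = (α_ (𝟙_ M) (𝟙_ M) Z).hom ≫ (x ⊗ₘ (y ⊗ₘ 𝟙 Z)) :=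
    associator_naturality x y (𝟙 Z)
  have h2 : (λ_ Z).inv ≫ ((λ_ (𝟙_ M)).inv ▷ Z) ≫ (α_ (𝟙_ M) (𝟙_ M) Z).hom
      = (λ_ Z).inv ≫ 𝟙_ M ◁ (λ_ Z).inv := by monoidal
  have h3 : (x ⊗ₘ (y ⊗ₘ 𝟙 Z)) = 𝟙_ M ◁ (y ▷ Z) ≫ x ▷ (Y ⊗ Z) := by
    rw [tensorHom_def', tensorHom_id]
  rw [tensorHom_id, comp_whiskerRight, Category.assoc, ← tensorHom_id (x ⊗ₘ y) Z,
    ← Category.assoc ((x ⊗ₘ y) ⊗ₘ 𝟙 Z), h1, h3]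
  simp only [Category.assoc]
  rw [reassoc_of% h2, ← MonoidalCategory.whiskerLeft_comp_assoc,
    ← leftUnitor_inv_naturality_assoc]
  simp [tensorHom_id]

end Aux

/-- The Nash product is associative up to the associator:
`Sel(α_{X,Y,Z})((ε ⊠ δ) ⊠ ζ) = ε ⊠ (δ ⊠ ζ)`. -/
theorem nashProd_assoc {X Y Z : M} (ε : Sel X) (δ : Sel Y) (ζ : Sel Z) :
    SelMap (α_ X Y Z).hom (nashProd (nashProd ε δ) ζ) =
      nashProd ε (nashProd δ ζ) := by
  ext ⟨p1, k⟩
  simp only [SelMap, nashProd, Set.mem_setOf_eq]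
  constructor
  · rintro ⟨w, hp, a, z, hw, ⟨x, y, hxy, hε, hδ⟩, hζ⟩
    subst hw hxy hp
    refine ⟨x, pairState y z, ?_, ?_, y, z, rfl, ?_, ?_⟩
    · rw [← pairState_assoc]
    · rw [← ctxFst_assoc]; exact hε
    · rw [← ctxMid_assoc]; exact hδ
    · rw [← ctxSnd_assoc]; exact hζ
  · rintro ⟨x, w, hp, hε, y, z, hw, hδ, hζ⟩
    subst hw hp
    refine ⟨pairState (pairState x y) z, (pairState_assoc x y z).symm,
      pairState x y, z, rfl, ⟨x, y, rfl, ?_, ?_⟩, ?_⟩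
    · rw [ctxFst_assoc]; exact hε
    · rw [ctxMid_assoc]; exact hδ
    · rw [ctxSnd_assoc]; exact hζ
end

section
/- For a cartesian monoidal category C, concretely for C = Set: the category of optics Optic_×(Set), defined with morphisms (X,X') → (Y,Y') as equivalence classes of triples (M, v : X → M × Y, u : M × Y' → X') under the equivalence generated by sliding morphisms of residuals, is equivalent (as a category) to Lens(Set); the equivalence sends the class of (M, v, u) to the lens (x ↦ (v x).2, (x, y') ↦ u ((v x).1, y')) and a lens (g, p) to the class of (X, x ↦ (x, g x), p). -/
/-- A representative of an optic `(X, X') → (Y, Y')` over cartesian `Set`: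
a residual `M`, a forward map `v : X → M × Y` and a backward map
`u : M × Y' → X'`. -/
def OpticRaw (X X' Y Y' : Type) : Type 1 :=
  Σ M : Type, (X → M × Y) × (M × Y' → X')

/-- The sliding relation: for `f : M → M'`,
`(M, v, (f × id) ≫ u) ∼ (M', v ≫ (f × id), u)`. -/
def opticRel {X X' Y Y' : Type} (a b : OpticRaw X X' Y Y') : Prop :=
  ∃ f : a.1 → b.1,
    (∀ x : X, b.2.1 x = (f (a.2.1 x).1, (a.2.1 x).2)) ∧
    (∀ (m : a.1) (y' : Y'), a.2.2 (m, y') = b.2.2 (f m, y'))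

/-- Optic morphisms are equivalence classes for the equivalence generated by
sliding. -/
def OpticEq {X X' Y Y' : Type} : OpticRaw X X' Y Y' → OpticRaw X X' Y Y' → Prop :=
  Relation.EqvGen opticRel

/-- The identity optic. -/
def opticId (X X' : Type) : OpticRaw X X' X X' :=
  ⟨PUnit, fun x => (PUnit.unit, x), fun p => p.2⟩

/-- Composition of optics. -/
def opticComp {X X' Y Y' Z Z' : Type}
    (a : OpticRaw X X' Y Y') (b : OpticRaw Y Y' Z Z') : OpticRaw X X' Z Z' :=
  ⟨a.1 × b.1,
   fun x => (((a.2.1 x).1, (b.2.1 (a.2.1 x).2).1), (b.2.1 (a.2.1 x).2).2),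
   fun p => a.2.2 (p.1.1, b.2.2 (p.1.2, p.2))⟩

/-- From an optic representative to a lens. -/
def toLens {X X' Y Y' : Type} (a : OpticRaw X X' Y Y') : Lens X X' Y Y' :=
  ⟨fun x => (a.2.1 x).2, fun p => a.2.2 ((a.2.1 p.1).1, p.2)⟩

/-- From a lens to an optic representative, with residual `X`. -/
def ofLens {X X' Y Y' : Type} (l : Lens X X' Y Y') : OpticRaw X X' Y Y' :=
  ⟨X, fun x => (x, l.get x), l.put⟩

/-- `Optic_×(Set)` is equivalent to `Lens(Set)`: `toLens` is well defined on
equivalence classes, it is mutually inverse to `ofLens` up to the sliding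
equivalence, and it is functorial; hence the assignments `toLens` and `ofLens`
form an equivalence of categories. -/
theorem optic_equiv_lens :
    -- toLens respects the sliding equivalence
    (∀ (X X' Y Y' : Type) (a b : OpticRaw X X' Y Y'),
      OpticEq a b → toLens a = toLens b) ∧
    -- mutually inverse
    (∀ (X X' Y Y' : Type) (l : Lens X X' Y Y'), toLens (ofLens l) = l) ∧
    (∀ (X X' Y Y' : Type) (a : OpticRaw X X' Y Y'),
      OpticEq (ofLens (toLens a)) a) ∧
    -- functoriality
    (∀ X X' : Type, toLens (opticId X X') = Lens.id X X') ∧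
    (∀ (X X' Y Y' Z Z' : Type) (a : OpticRaw X X' Y Y') (b : OpticRaw Y Y' Z Z'),
      toLens (opticComp a b) = (toLens a).comp (toLens b)) := by
  refine ⟨?_, ?_, ?_, ?_, ?_⟩
  · intro X X' Y Y' a b h
    induction h with
    | rel a b hab =>
      obtain ⟨f, hv, hu⟩ := hab
      simp only [toLens, Lens.mk.injEq]
      constructor
      · funext x; rw [hv x]
      · funext p; rw [hu, hv]
    | refl => rfl
    | symm _ _ _ ih => exact ih.symm
    | trans _ _ _ _ _ ih1 ih2 => exact ih1.trans ih2
  · intro X X' Y Y' l; rfl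
  · intro X X' Y Y' a
    apply Relation.EqvGen.rel
    exact ⟨fun x => (a.2.1 x).1, fun x => rfl, fun m y' => rfl⟩
  · intro X X'; rfl
  · intro X X' Y Y' Z Z' a b; rfl
end
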